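/- arXiv:2210.07579 — 2 statements merged into one kernel-verified Lean document; each statement's English description precedes it below -/
import Mathlib

section
/- Let t₀ ∈ ℝ and ε ∈ (0, π). Then ∫ over (t₀-π, t₀-ε) ∪ (t₀+ε, t₀+π) of e^{it}/(e^{it} - e^{it₀})² dt = -(1/e^{it₀}) · (1/tan(ε/2)). -/
open Complex Real

-- FTC helper
lemma ftc (t₀ u v : ℝ) (h : ∀ t ∈ Set.uIcc u v, Complex.exp (Complex.I * t) ≠ Complex.exp (Complex.I * t₀)) :
    (∫ t in u..v, Complex.exp (Complex.I * t) / (Complex.exp (Complex.I * t) - Complex.exp (Complex.I * t₀)) ^ 2)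
      = (-(Complex.I * (Complex.exp (Complex.I * v) - Complex.exp (Complex.I * t₀)))⁻¹)
        - (-(Complex.I * (Complex.exp (Complex.I * u) - Complex.exp (Complex.I * t₀)))⁻¹) := by
  have hderiv : ∀ t ∈ Set.uIcc u v,
      HasDerivAt (fun t : ℝ => -(Complex.I * (Complex.exp (Complex.I * t) - Complex.exp (Complex.I * t₀)))⁻¹)
        (Complex.exp (Complex.I * t) / (Complex.exp (Complex.I * t) - Complex.exp (Complex.I * t₀)) ^ 2) t := by
    intro t ht
    have h1 : HasDerivAt (fun t : ℝ => (t : ℂ)) 1 t := Complex.ofRealCLM.hasDerivAt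
    have h2 : HasDerivAt (fun t : ℝ => Complex.I * t) Complex.I t := by
      simpa using h1.const_mul Complex.I
    have h3 : HasDerivAt (fun t : ℝ => Complex.exp (Complex.I * t))
        (Complex.exp (Complex.I * t) * Complex.I) t := h2.cexp
    have h4 : HasDerivAt (fun t : ℝ => Complex.I * (Complex.exp (Complex.I * t) - Complex.exp (Complex.I * t₀)))
        (Complex.I * (Complex.exp (Complex.I * t) * Complex.I)) t := (h3.sub_const _).const_mul _
    have hne : Complex.I * (Complex.exp (Complex.I * t) - Complex.exp (Complex.I * t₀)) ≠ 0 :=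
      mul_ne_zero Complex.I_ne_zero (sub_ne_zero.mpr (h t ht))
    have h5 := (hasDerivAt_const t (-1 : ℂ)).div h4 hne
    have heqF : (fun t : ℝ => -(Complex.I * (Complex.exp (Complex.I * t) - Complex.exp (Complex.I * t₀)))⁻¹)
        = fun t : ℝ => (-1 : ℂ) / (Complex.I * (Complex.exp (Complex.I * t) - Complex.exp (Complex.I * t₀))) := by
      funext t; rw [div_eq_mul_inv]; ring
    rw [heqF]
    refine HasDerivAt.congr_deriv h5 ?_
    have hI := Complex.I_ne_zero
    have hne2 : Complex.exp (Complex.I * t) - Complex.exp (Complex.I * t₀) ≠ 0 :=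
      sub_ne_zero.mpr (h t ht)
    rw [div_eq_div_iff (pow_ne_zero _ hne) (pow_ne_zero _ hne2)]
    ring
  refine intervalIntegral.integral_eq_sub_of_hasDerivAt hderiv ?_
  apply ContinuousOn.intervalIntegrable
  apply ContinuousOn.div
  · exact (Complex.continuous_exp.comp (continuous_const.mul Complex.continuous_ofReal)).continuousOn
  · exact (((Complex.continuous_exp.comp (continuous_const.mul Complex.continuous_ofReal)).sub continuous_const).pow 2).continuousOn
  · intro t ht
    exact pow_ne_zero _ (sub_ne_zero.mpr (h t ht))

theorem stmt5 (t₀ ε : ℝ) (hε : ε ∈ Set.Ioo 0 Real.pi) :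
    ((∫ t in (t₀ - Real.pi)..(t₀ - ε),
        exp (Complex.I * t) / (exp (Complex.I * t) - exp (Complex.I * t₀)) ^ 2) +
      ∫ t in (t₀ + ε)..(t₀ + Real.pi),
        exp (Complex.I * t) / (exp (Complex.I * t) - exp (Complex.I * t₀)) ^ 2) =
      -(1 / exp (Complex.I * t₀)) * (1 / (Real.tan (ε / 2) : ℂ)) := by
  obtain ⟨hε0, hεπ⟩ := hε
  have hπ := Real.pi_pos
  have key : ∀ t : ℝ, ε ≤ |t - t₀| → |t - t₀| ≤ Real.pi →
      Complex.exp (Complex.I * t) ≠ Complex.exp (Complex.I * t₀) := by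
    intro t h1 h2 heq
    rw [Complex.exp_eq_exp_iff_exists_int] at heq
    obtain ⟨n, hn⟩ := heq
    have h3 : (Complex.I : ℂ) * (t - t₀) = Complex.I * ((n : ℂ) * (2 * Real.pi)) := by
      rw [mul_sub, hn]; ring
    have h4 : (t : ℂ) - t₀ = (n : ℂ) * (2 * Real.pi) :=
      mul_left_cancel₀ Complex.I_ne_zero h3
    have h5 : t - t₀ = (n : ℝ) * (2 * Real.pi) := by
      exact_mod_cast h4
    rcases eq_or_ne n 0 with h | h
    · rw [h] at h5; simp at h5; rw [h5] at h1; simp at h1; linarith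
    · have : (1 : ℝ) ≤ |(n : ℝ)| := by exact_mod_cast Int.one_le_abs h
      have : 2 * Real.pi ≤ |t - t₀| := by
        rw [h5, abs_mul, abs_of_pos (by positivity : (0:ℝ) < 2 * Real.pi)]
        nlinarith
      linarith
  rw [ftc t₀ _ _ ?h1, ftc t₀ _ _ ?h2]
  case h1 =>
    intro t ht
    rw [Set.uIcc_of_le (by linarith)] at ht
    refine key t ?_ ?_ <;> rw [abs_sub_comm, _root_.abs_of_nonneg (by linarith [ht.2] : 0 ≤ t₀ - t)] <;>
      [linarith [ht.2]; linarith [ht.1]]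
  case h2 =>
    intro t ht
    rw [Set.uIcc_of_le (by linarith)] at ht
    refine key t ?_ ?_ <;> rw [_root_.abs_of_nonneg (by linarith [ht.1] : 0 ≤ t - t₀)] <;>
      [linarith [ht.1]; linarith [ht.2]]
  have E : ∀ x : ℝ, Complex.exp (Complex.I * ((t₀ + x : ℝ) : ℂ)) =
      Complex.exp (Complex.I * t₀) * Complex.exp ((x : ℂ) * Complex.I) := by
    intro x
    rw [← Complex.exp_add]; congr 1; push_cast; ring
  have Em : Complex.exp (Complex.I * ((t₀ - Real.pi : ℝ) : ℂ)) = -Complex.exp (Complex.I * t₀) := by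
    rw [show (t₀ - Real.pi) = t₀ + (-Real.pi) by ring, E]
    push_cast
    rw [neg_mul, Complex.exp_neg, Complex.exp_pi_mul_I]
    norm_num
  have Ep : Complex.exp (Complex.I * ((t₀ + Real.pi : ℝ) : ℂ)) = -Complex.exp (Complex.I * t₀) := by
    rw [E, Complex.exp_pi_mul_I]; ring
  have Eme : Complex.exp (Complex.I * ((t₀ - ε : ℝ) : ℂ)) =
      Complex.exp (Complex.I * t₀) * ((Real.cos ε : ℂ) - (Real.sin ε : ℂ) * Complex.I) := by
    rw [show (t₀ - ε) = t₀ + (-ε) by ring, E]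
    push_cast
    rw [Complex.exp_mul_I, Complex.cos_neg, Complex.sin_neg,
      ← Complex.ofReal_cos, ← Complex.ofReal_sin]
    ring
  have Epe : Complex.exp (Complex.I * ((t₀ + ε : ℝ) : ℂ)) =
      Complex.exp (Complex.I * t₀) * ((Real.cos ε : ℂ) + (Real.sin ε : ℂ) * Complex.I) := by
    rw [E, Complex.exp_mul_I, ← Complex.ofReal_cos, ← Complex.ofReal_sin]
  rw [Em, Ep, Eme, Epe]
  set a := Complex.exp (Complex.I * t₀) with ha
  have ha0 : a ≠ 0 := Complex.exp_ne_zero _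
  have hs2 : 0 < Real.sin (ε / 2) := Real.sin_pos_of_pos_of_lt_pi (by linarith) (by linarith)
  have hc2 : 0 < Real.cos (ε / 2) :=
    Real.cos_pos_of_mem_Ioo ⟨by linarith, by linarith⟩
  have hcos : Real.cos ε = 1 - 2 * Real.sin (ε / 2) ^ 2 := by
    have := Real.cos_two_mul (ε / 2)
    have h2 : 2 * (ε / 2) = ε := by ring
    rw [h2] at this
    nlinarith [Real.sin_sq_add_cos_sq (ε / 2)]
  have hsin : Real.sin ε = 2 * Real.sin (ε / 2) * Real.cos (ε / 2) := by
    have := Real.sin_two_mul (ε / 2)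
    rw [show 2 * (ε / 2) = ε by ring] at this
    linarith
  have htan : Real.tan (ε / 2) = Real.sin (ε / 2) / Real.cos (ε / 2) := Real.tan_eq_sin_div_cos _
  rw [hcos, hsin, htan]
  set s2 := Real.sin (ε / 2)
  set c2 := Real.cos (ε / 2)
  have hpy : (s2 : ℂ) ^ 2 + (c2 : ℂ) ^ 2 = 1 := by
    exact_mod_cast congrArg (fun x : ℝ => (x : ℂ)) (Real.sin_sq_add_cos_sq (ε / 2))
  have hs20 : (s2 : ℂ) ≠ 0 := by exact_mod_cast hs2.ne'
  have hc20 : (c2 : ℂ) ≠ 0 := by exact_mod_cast hc2.ne'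
  push_cast
  have d1 : a * (1 - 2 * (s2:ℂ)^2 - 2 * s2 * c2 * Complex.I) - a ≠ 0 := by
    have : a * (1 - 2 * (s2:ℂ)^2 - 2 * s2 * c2 * Complex.I) - a
        = -2 * a * s2 * (s2 + c2 * Complex.I) := by ring
    rw [this]
    refine mul_ne_zero (mul_ne_zero (mul_ne_zero (by norm_num) ha0) hs20) ?_
    intro h
    have := congrArg Complex.re h
    simp at this
    exact hs2.ne' (by exact_mod_cast this)
  have d2 : a * (1 - 2 * (s2:ℂ)^2 + 2 * s2 * c2 * Complex.I) - a ≠ 0 := by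
    have : a * (1 - 2 * (s2:ℂ)^2 + 2 * s2 * c2 * Complex.I) - a
        = -2 * a * s2 * (s2 - c2 * Complex.I) := by ring
    rw [this]
    refine mul_ne_zero (mul_ne_zero (mul_ne_zero (by norm_num) ha0) hs20) ?_
    intro h
    have := congrArg Complex.re h
    simp at this
    exact hs2.ne' (by exact_mod_cast this)
  have hI := Complex.I_ne_zero
  field_simp
  ring_nf
  have h4 : Complex.I ^ 4 = 1 := by
    rw [show (4:ℕ) = 2*2 by rfl, pow_mul, Complex.I_sq]; norm_num
  have e1 : (-(↑s2 * I * ↑c2 * 2) - ↑s2 ^ 2 * 2 : ℂ) ≠ 0 := by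
    intro h; apply d1
    rw [show a * (1 - 2 * (s2:ℂ)^2 - 2 * s2 * c2 * Complex.I) - a = a * (-(↑s2 * I * ↑c2 * 2) - ↑s2 ^ 2 * 2) by ring, h, mul_zero]
  have e2 : (↑s2 * I * ↑c2 * 2 - ↑s2 ^ 2 * 2 : ℂ) ≠ 0 := by
    intro h; apply d2
    rw [show a * (1 - 2 * (s2:ℂ)^2 + 2 * s2 * c2 * Complex.I) - a = a * (↑s2 * I * ↑c2 * 2 - ↑s2 ^ 2 * 2) by ring, h, mul_zero]
  field_simp
  have f1 : (-(I * ↑c2) - ↑s2 : ℂ) ≠ 0 := by intro h; apply e1; linear_combination (2 * (s2:ℂ)) * h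
  have f2 : (I * ↑c2 - ↑s2 : ℂ) ≠ 0 := by intro h; apply e2; linear_combination (2 * (s2:ℂ)) * h
  rw [div_sub_div _ _ f1 f2, div_eq_iff (mul_ne_zero f1 f2)]
  linear_combination (2 * I * (c2:ℂ) ^ 3) * Complex.I_sq - (2 * I * (c2:ℂ)) * hpy
end

section
/- For every k ∈ ℕ with k ≥ 1, (1/i^k) (d/dt)^k [e^{it}/(e^{it}+1)] evaluated at t = 0 equals -E_k(0)/2, where E_k is the k-th Euler polynomial. -/
open Complex Topology

/-- `E_k(0)`: the value at `0` of the `k`-th Euler polynomial, defined via the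
generating function `2/(e^t+1) = ∑ E_m(0) t^m/m!`. -/
noncomputable def eulerAtZero (k : ℕ) : ℂ :=
  iteratedDeriv k (fun t : ℂ => 2 / (Complex.exp t + 1)) 0

private noncomputable def hfun : ℂ → ℂ := fun t => (Complex.exp t + 1)⁻¹

private def Uset : Set ℂ := {t : ℂ | Complex.exp t + 1 ≠ 0}

private lemma Uopen : IsOpen Uset :=
  isOpen_compl_singleton.preimage (by continuity : Continuous fun t : ℂ => Complex.exp t + 1)

private lemma hAnalytic : AnalyticOnNhd ℂ hfun Uset := fun z hz =>
  ((analyticAt_cexp.add analyticAt_const).inv hz)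

private lemma iterAnalytic (n : ℕ) : AnalyticOnNhd ℂ (iteratedDeriv n hfun) Uset := by
  induction n with
  | zero => simpa using hAnalytic
  | succ n ih => rw [iteratedDeriv_succ]; exact ih.deriv

private lemma Vopen : IsOpen {w : ℂ | Complex.exp (Complex.I * w) + 1 ≠ 0} :=
  isOpen_compl_singleton.preimage
    (by continuity : Continuous fun t : ℂ => Complex.exp (Complex.I * t) + 1)

private lemma keyA (n : ℕ) : ∀ z : ℂ, Complex.exp (Complex.I * z) + 1 ≠ 0 →
    iteratedDeriv n (fun t => hfun (Complex.I * t)) z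
      = Complex.I ^ n * iteratedDeriv n hfun (Complex.I * z) := by
  induction n with
  | zero => intro z hz; simp
  | succ n ih =>
    intro z hz
    have hev : (iteratedDeriv n fun t => hfun (Complex.I * t)) =ᶠ[𝓝 z]
        fun w => Complex.I ^ n * iteratedDeriv n hfun (Complex.I * w) := by
      filter_upwards [Vopen.mem_nhds hz] with w hw using ih w hw
    have hd : DifferentiableAt ℂ (iteratedDeriv n hfun) (Complex.I * z) :=
      (iterAnalytic n (Complex.I * z) hz).differentiableAt
    have hcomp : HasDerivAt (fun w => iteratedDeriv n hfun (Complex.I * w))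
        (deriv (iteratedDeriv n hfun) (Complex.I * z) * Complex.I) z :=
      HasDerivAt.comp z hd.hasDerivAt (by simpa using (hasDerivAt_id z).const_mul Complex.I)
    have hmul : HasDerivAt (fun w => Complex.I ^ n * iteratedDeriv n hfun (Complex.I * w))
        (Complex.I ^ n * (deriv (iteratedDeriv n hfun) (Complex.I * z) * Complex.I)) z :=
      hcomp.const_mul _
    rw [iteratedDeriv_succ, hev.deriv_eq, hmul.deriv, iteratedDeriv_succ]
    ring

private lemma euler_eq (k : ℕ) : eulerAtZero k = 2 * iteratedDeriv k hfun 0 := by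
  have h0 : (0 : ℂ) ∈ Uset := by norm_num [Uset, Complex.exp_zero]
  have hopen : ∀ (f : ℂ → ℂ), iteratedDerivWithin k f Uset 0 = iteratedDeriv k f 0 := by
    intro f
    simp only [iteratedDerivWithin, iteratedDeriv, iteratedFDerivWithin_of_isOpen k Uopen h0]
  have hcd : ContDiffOn ℂ k hfun Uset := hAnalytic.contDiffOn Uopen.uniqueDiffOn
  have : eulerAtZero k = iteratedDeriv k (fun t => 2 * hfun t) 0 := by
    unfold eulerAtZero hfun
    simp only [div_eq_mul_inv]
  rw [this, ← hopen, ← hopen,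
    iteratedDerivWithin_const_mul h0 Uopen.uniqueDiffOn _ (hcd 0 h0)]

theorem stmt15 (k : ℕ) (hk : 1 ≤ k) :
    (1 / Complex.I ^ k) *
      iteratedDeriv k
        (fun t : ℂ => Complex.exp (Complex.I * t) / (Complex.exp (Complex.I * t) + 1)) 0 =
      -eulerAtZero k / 2 := by
  have h0 : Complex.exp (Complex.I * 0) + 1 ≠ 0 := by
    norm_num [Complex.exp_zero]
  have hev : (fun t : ℂ => Complex.exp (Complex.I * t) / (Complex.exp (Complex.I * t) + 1))
      =ᶠ[𝓝 (0 : ℂ)] fun t => 1 - hfun (Complex.I * t) := by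
    filter_upwards [Vopen.mem_nhds h0] with w hw
    unfold hfun
    field_simp
    ring
  have step1 : iteratedDeriv k
        (fun t : ℂ => Complex.exp (Complex.I * t) / (Complex.exp (Complex.I * t) + 1)) 0
      = iteratedDeriv k (fun t => 1 - hfun (Complex.I * t)) 0 :=
    hev.iteratedDeriv_eq k
  have step2 : iteratedDeriv k (fun t => 1 - hfun (Complex.I * t)) 0
      = -iteratedDeriv k (fun t => hfun (Complex.I * t)) 0 := by
    simp only [← iteratedDerivWithin_univ]
    rw [iteratedDerivWithin_const_sub hk,
      iteratedDerivWithin_fun_neg]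
  have step3 := keyA k 0 h0
  have hIk : Complex.I ^ k ≠ 0 := pow_ne_zero _ Complex.I_ne_zero
  rw [step1, step2, step3, euler_eq k, mul_zero] at *
  field_simp
end
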